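/- Let Γ be a set of assumptions as above. For every KAT expression e, atom α, and action p: D_{αp}(GS^Γ(e)) = GS^Γ(Δ^Γ_{αp}(e)). -/

import Mathlib

/-!
Every string of `GS^Γ(e)` begins and ends with an atom of `At^Γ`. Hence for `α ∉ At^Γ` both sides
are empty, and fusing a set of such strings with `GS^Γ(1) = At^Γ` changes nothing, which justifies
the shortcut `Γ·1 = Γ` in `prodSet`. For `α ∈ At^Γ` the claim follows by structural induction on
`e` from Brzozowski's rules for fusion products, `D(X ⋄ Y) = D(X) ⋄ Y ∪ [α ∈ X] D(Y)` and
`D(X*) = D(X) ⋄ X*`. `Γ` enters only at an action `p`: the strings `α p β` of `GS^Γ(p)` are those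
with `β ≤ b'` for every equation `b p b̄' = 0` with `α ≤ b`, i.e. with `β ≤ gammaProd G α p`.
-/

namespace KAT

variable {T A : Type} [DecidableEq A]

/-- Atoms: truth assignments to the primitive tests. -/
abbrev Atom (T : Type) := T → Bool

/-- A guarded string `α₁p₁α₂p₂⋯p_{n-1}αₙ`, as the list of (atom, action)
pairs together with the final atom. -/
structure GStr (T A : Type) where
  pairs : List (Atom T × A)
  last : Atom T

/-- The first atom of a guarded string. -/
def GStr.first (x : GStr T A) : Atom T :=
  match x.pairs with
  | [] => x.last
  | (α, _) :: _ => α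

/-- Fusion product on sets of guarded strings. -/
def fprod (X Y : Set (GStr T A)) : Set (GStr T A) :=
  {z | ∃ x ∈ X, ∃ y ∈ Y, x.last = y.first ∧ z = ⟨x.pairs ++ y.pairs, y.last⟩}

/-- The set of atoms, viewed as guarded strings. -/
def atomsGS : Set (GStr T A) := {z | z.pairs = []}

/-- Fusion powers: `X⁰ = At`, `X^{n+1} = X ⋄ Xⁿ`. -/
def fpow (X : Set (GStr T A)) : ℕ → Set (GStr T A)
  | 0 => atomsGS
  | n + 1 => fprod X (fpow X n)

/-- `X* = ∪ₙ Xⁿ`. -/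
def fstar (X : Set (GStr T A)) : Set (GStr T A) := ⋃ n, fpow X n

/-- Derivative of a set of guarded strings w.r.t. `αp`. -/
def gderiv (α : Atom T) (p : A) (R : Set (GStr T A)) : Set (GStr T A) :=
  {y | (⟨(α, p) :: y.pairs, y.last⟩ : GStr T A) ∈ R}

/-- Boolean expressions over primitive tests `T`. -/
inductive BExp (T : Type) where
  | zero | one
  | test (t : T)
  | not (b : BExp T)
  | or (b₁ b₂ : BExp T)
  | and (b₁ b₂ : BExp T)

/-- Evaluation of a Boolean expression at an atom (`α ≤ b`). -/
def BExp.eval (α : Atom T) : BExp T → Bool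
  | .zero => false
  | .one => true
  | .test t => α t
  | .not b => !(b.eval α)
  | .or b₁ b₂ => b₁.eval α || b₂.eval α
  | .and b₁ b₂ => b₁.eval α && b₂.eval α

/-- KAT expressions over actions `Σ = A` and tests `T`. -/
inductive KExp (T A : Type) where
  | act (p : A)
  | test (b : BExp T)
  | plus (e₁ e₂ : KExp T A)
  | cat (e₁ e₂ : KExp T A)
  | star (e : KExp T A)

/-- Guarded-string semantics of a KAT expression. -/
def gs : KExp T A → Set (GStr T A)
  | .act p => {z | ∃ α β, z = ⟨[(α, p)], β⟩}
  | .test b => {z | z.pairs = [] ∧ b.eval z.last = true}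
  | .plus e₁ e₂ => gs e₁ ∪ gs e₂
  | .cat e₁ e₂ => fprod (gs e₁) (gs e₂)
  | .star e => fstar (gs e)

/-- Syntactic evaluation `E_α`. -/
def Eps (α : Atom T) : KExp T A → Bool
  | .act _ => false
  | .test b => b.eval α
  | .plus e₁ e₂ => Eps α e₁ || Eps α e₂
  | .cat e₁ e₂ => Eps α e₁ && Eps α e₂
  | .star _ => true

/-- `Γ · e`, with `Γ·0 = ∅` and `Γ·1 = Γ`. -/
def prodSet (Γ : Set (KExp T A)) : KExp T A → Set (KExp T A)
  | .test .zero => ∅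
  | .test .one => Γ
  | e => {x | ∃ e' ∈ Γ, x = .cat e' e}

/-- Partial derivatives `Δ_{αp}(e)`. -/
def pd (α : Atom T) (p : A) : KExp T A → Set (KExp T A)
  | .act p' => if p = p' then {.test .one} else ∅
  | .test _ => ∅
  | .plus e₁ e₂ => pd α p e₁ ∪ pd α p e₂
  | .cat e₁ e₂ => prodSet (pd α p e₁) e₂ ∪ (if Eps α e₁ then pd α p e₂ else ∅)
  | .star e => prodSet (pd α p e) (.star e)

/-- Guarded-string semantics of a set of expressions. -/
def gsSet (E : Set (KExp T A)) : Set (GStr T A) := ⋃ e ∈ E, gs e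

/-- Partial derivative of a set of expressions. -/
def pdS (α : Atom T) (p : A) (E : Set (KExp T A)) : Set (KExp T A) :=
  ⋃ e ∈ E, pd α p e

/-- Iterated partial derivative `Δ̂_w(e)` along a word `w ∈ (At·Σ)*`. -/
def pdWord (w : List (Atom T × A)) (e : KExp T A) : Set (KExp T A) :=
  w.foldl (fun E x => pdS x.1 x.2 E) {e}

/-- The closure `PD(e)`. -/
def PD : KExp T A → Set (KExp T A)
  | .test b => {.test b}
  | .act p => {.act p, .test .one}
  | .plus e₁ e₂ => {.plus e₁ e₂} ∪ PD e₁ ∪ PD e₂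
  | .cat e₁ e₂ => {.cat e₁ e₂} ∪ prodSet (PD e₁) e₂ ∪ PD e₂
  | .star e => {.star e} ∪ prodSet (PD e) (.star e)

/-- Number of symbols in the syntactic tree of a Boolean expression. -/
def BExp.size : BExp T → ℕ
  | .zero => 1 | .one => 1 | .test _ => 1
  | .not b => b.size + 1
  | .or b₁ b₂ => b₁.size + b₂.size + 1
  | .and b₁ b₂ => b₁.size + b₂.size + 1

/-- Number of symbols in the syntactic tree of a KAT expression. -/
def KExp.size : KExp T A → ℕ
  | .act _ => 1
  | .test b => b.size
  | .plus e₁ e₂ => e₁.size + e₂.size + 1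
  | .cat e₁ e₂ => e₁.size + e₂.size + 1
  | .star e => e.size + 1

/-- A set of assumptions `Γ`: equations `b p b̄' = 0` and inequalities `c ≤ c'`. -/
structure Gamma (T A : Type) where
  eqns : List (BExp T × A × BExp T)
  ineqs : List (BExp T × BExp T)

/-- `α ∈ At^Γ`. -/
def inAtG (G : Gamma T A) (α : Atom T) : Bool :=
  G.ineqs.all fun cc => !(cc.1.eval α) || cc.2.eval α

/-- The atoms of `At^Γ`, viewed as guarded strings. -/
def atomsG (G : Gamma T A) : Set (GStr T A) := {z | z.pairs = [] ∧ inAtG G z.last = true}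

/-- Γ-restricted fusion powers (base case `At^Γ`). -/
def fpowG (G : Gamma T A) (X : Set (GStr T A)) : ℕ → Set (GStr T A)
  | 0 => atomsG G
  | n + 1 => fprod X (fpowG G X n)

def fstarG (G : Gamma T A) (X : Set (GStr T A)) : Set (GStr T A) := ⋃ n, fpowG G X n

/-- The Γ-restricted guarded-string semantics `GS^Γ`. -/
def gsG (G : Gamma T A) : KExp T A → Set (GStr T A)
  | .act p => {z | ∃ α β, inAtG G α = true ∧ inAtG G β = true ∧
      (∀ x ∈ G.eqns, x.2.1 = p → x.1.eval α = true → x.2.2.eval β = true) ∧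
      z = ⟨[(α, p)], β⟩}
  | .test b => {z | z.pairs = [] ∧ inAtG G z.last = true ∧ b.eval z.last = true}
  | .plus e₁ e₂ => gsG G e₁ ∪ gsG G e₂
  | .cat e₁ e₂ => fprod (gsG G e₁) (gsG G e₂)
  | .star e => fstarG G (gsG G e)

def gsSetG (G : Gamma T A) (E : Set (KExp T A)) : Set (GStr T A) := ⋃ e ∈ E, gsG G e

/-- Sum of a list of KAT expressions. -/
def sumList (l : List (KExp T A)) : KExp T A := l.foldr .plus (.test .zero)

/-- The universal expression `u = (p₁ + ⋯ + p_k)*`. -/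
def uExp (ps : List A) : KExp T A := .star (sumList (ps.map .act))

/-- `r = Σᵢ bᵢpᵢb̄ᵢ' + Σⱼ cⱼc̄ⱼ'`. -/
def rExp (G : Gamma T A) : KExp T A :=
  sumList
    (G.eqns.map (fun x => .cat (.cat (.test x.1) (.act x.2.1)) (.test (.not x.2.2))) ++
     G.ineqs.map (fun x => .cat (.test x.1) (.test (.not x.2))))

/-- The expression `u r u`. -/
def uru (G : Gamma T A) (ps : List A) : KExp T A :=
  .cat (.cat (uExp ps) (rExp G)) (uExp ps)

/-- `Π{b' | (b p b̄' = 0) ∈ Γ, α ≤ b}` (equal to `1` if there are none). -/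
def gammaProd (G : Gamma T A) (α : Atom T) (p : A) : BExp T :=
  ((G.eqns.filter fun x => decide (x.2.1 = p) && x.1.eval α).map fun x => x.2.2).foldr .and .one

def pdGaux (G : Gamma T A) (α : Atom T) (p : A) : KExp T A → Set (KExp T A)
  | .act p' => if p = p' then {.test (gammaProd G α p)} else ∅
  | .test _ => ∅
  | .plus e₁ e₂ => pdGaux G α p e₁ ∪ pdGaux G α p e₂
  | .cat e₁ e₂ => prodSet (pdGaux G α p e₁) e₂ ∪ (if Eps α e₁ then pdGaux G α p e₂ else ∅)
  | .star e => prodSet (pdGaux G α p e) (.star e)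

/-- The Γ-partial derivative `Δ^Γ_{αp}(e)`. -/
def pdG (G : Gamma T A) (α : Atom T) (p : A) (e : KExp T A) : Set (KExp T A) :=
  if inAtG G α then pdGaux G α p e else ∅

/-- The atoms occurring in a guarded string. -/
def atomsOf (x : GStr T A) : List (Atom T) := x.pairs.map Prod.fst ++ [x.last]

/-- The substrings `α p β` of a guarded string. -/
def triplesOf (x : GStr T A) : List (Atom T × A × Atom T) :=
  List.zipWith (fun ap β => (ap.1, ap.2, β)) x.pairs
    ((x.pairs.map Prod.fst).drop 1 ++ [x.last])

/-- `Γ·e` on transition pairs, with `Γ·0 = ∅` and `Γ·1 = Γ`. -/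
def prodPairs (Γ : Set ((Atom T × A) × KExp T A)) :
    KExp T A → Set ((Atom T × A) × KExp T A)
  | .test .zero => ∅
  | .test .one => Γ
  | e => {x | ∃ y ∈ Γ, x = (y.1, .cat y.2 e)}

/-- The transition function `𝖿`. -/
def fset : KExp T A → Set ((Atom T × A) × KExp T A)
  | .act p => {x | ∃ α : Atom T, x = ((α, p), .test .one)}
  | .test _ => ∅
  | .plus e₁ e₂ => fset e₁ ∪ fset e₂
  | .cat e₁ e₂ => prodPairs (fset e₁) e₂ ∪ {x ∈ fset e₂ | Eps x.1.1 e₁ = true}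
  | .star e => prodPairs (fset e) (.star e)

/-- `der_{αp}(e) = {e' | (αp, e') ∈ 𝖿(e)}`. -/
def der (α : Atom T) (p : A) (e : KExp T A) : Set (KExp T A) :=
  {e' | ((α, p), e') ∈ fset e}

end KAT

namespace KAT

variable {T A : Type}

theorem GStr.first_fuse {x y : GStr T A} (h : x.last = y.first) :
    (⟨x.pairs ++ y.pairs, y.last⟩ : GStr T A).first = x.first := by
  obtain ⟨_ | ⟨a, xs⟩, xl⟩ := x
  · exact h.symm
  · rfl

theorem mem_gderiv {α : Atom T} {p : A} {R : Set (GStr T A)} {zs : List (Atom T × A)}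
    {zl : Atom T} : (⟨zs, zl⟩ : GStr T A) ∈ gderiv α p R ↔ ⟨(α, p) :: zs, zl⟩ ∈ R := Iff.rfl

section Fusion

theorem fprod_mono_right {X Y Y' : Set (GStr T A)} (h : Y ⊆ Y') : fprod X Y ⊆ fprod X Y' := by
  rintro z ⟨x, hx, y, hy, hl, rfl⟩
  exact ⟨x, hx, y, h hy, hl, rfl⟩

theorem fprod_empty (X : Set (GStr T A)) : fprod X ∅ = ∅ := by
  ext z
  simp [fprod]

theorem fprod_atomsG {G : Gamma T A} {X : Set (GStr T A)}
    (hX : ∀ x ∈ X, inAtG G x.last = true) : fprod X (atomsG G) = X := by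
  ext z
  constructor
  · rintro ⟨x, hx, ⟨ys, yl⟩, ⟨rfl : ys = [], -⟩, hl, rfl⟩
    obtain rfl : x.last = yl := hl
    simpa using hx
  · intro hz
    exact ⟨z, hz, ⟨[], z.last⟩, ⟨rfl, hX z hz⟩, rfl, by simp⟩

theorem nil_mem_fprod {X Y : Set (GStr T A)} {α : Atom T} :
    (⟨[], α⟩ : GStr T A) ∈ fprod X Y ↔ ⟨[], α⟩ ∈ X ∧ ⟨[], α⟩ ∈ Y := by
  constructor
  · rintro ⟨⟨xs, xl⟩, hx, ⟨ys, yl⟩, hy, hl, hz⟩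
    simp only [GStr.mk.injEq, List.nil_eq, List.append_eq_nil_iff] at hz
    obtain ⟨⟨rfl, rfl⟩, rfl⟩ := hz
    obtain rfl : xl = α := hl
    exact ⟨hx, hy⟩
  · rintro ⟨hx, hy⟩
    exact ⟨_, hx, _, hy, rfl, rfl⟩

theorem gderiv_fprod (α : Atom T) (p : A) (X Y : Set (GStr T A)) :
    gderiv α p (fprod X Y) =
      fprod (gderiv α p X) Y ∪ {y | (⟨[], α⟩ : GStr T A) ∈ X ∧ y ∈ gderiv α p Y} := by
  ext ⟨zs, zl⟩
  constructor
  · rintro ⟨⟨_ | ⟨a, xs⟩, xl⟩, hx, ⟨ys, yl⟩, hy, hl, hz⟩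
    · simp only [GStr.mk.injEq, List.nil_append] at hz
      obtain ⟨rfl, rfl⟩ := hz
      obtain rfl : xl = α := hl
      exact Or.inr ⟨hx, hy⟩
    · simp only [GStr.mk.injEq, List.cons_append, List.cons.injEq] at hz
      obtain ⟨⟨rfl, rfl⟩, rfl⟩ := hz
      exact Or.inl ⟨⟨xs, xl⟩, hx, _, hy, hl, rfl⟩
  · rintro (⟨x, hx, y, hy, hl, hz⟩ | ⟨hx, hy⟩)
    · simp only [GStr.mk.injEq] at hz
      obtain ⟨rfl, rfl⟩ := hz
      exact ⟨_, hx, y, hy, hl, rfl⟩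
    · exact ⟨⟨[], α⟩, hx, _, hy, rfl, rfl⟩

theorem gderiv_fstarG (G : Gamma T A) (α : Atom T) (p : A) (X : Set (GStr T A)) :
    gderiv α p (fstarG G X) = fprod (gderiv α p X) (fstarG G X) := by
  have gderiv_fpowG : ∀ n, gderiv α p (fpowG G X n) ⊆ fprod (gderiv α p X) (fstarG G X) := by
    intro n
    induction n with
    | zero => rintro z ⟨h, -⟩; cases h
    | succ n ih =>
      rw [fpowG, gderiv_fprod]
      rintro z (hz | ⟨-, hz⟩)
      · exact fprod_mono_right (Set.subset_iUnion (fpowG G X) n) hz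
      · exact ih hz
  apply Set.Subset.antisymm
  · intro z hz
    obtain ⟨n, hn⟩ := Set.mem_iUnion.mp hz
    exact gderiv_fpowG n hn
  · rintro z ⟨x, hx, y, hy, hl, rfl⟩
    obtain ⟨n, hn⟩ := Set.mem_iUnion.mp hy
    exact Set.mem_iUnion.mpr ⟨n + 1, _, hx, y, hn, hl, rfl⟩

end Fusion

section Semantics

variable {G : Gamma T A}

theorem inAtG_last_of_mem_fpowG {X : Set (GStr T A)} :
    ∀ {n : ℕ} {x : GStr T A}, x ∈ fpowG G X n → inAtG G x.last = true
  | 0, _, hx => hx.2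
  | _ + 1, _, ⟨_, _, _, hy, _, rfl⟩ => (inAtG_last_of_mem_fpowG hy :)

theorem inAtG_first_of_mem_fpowG {X : Set (GStr T A)}
    (hX : ∀ x ∈ X, inAtG G x.first = true) :
    ∀ {n : ℕ} {x : GStr T A}, x ∈ fpowG G X n → inAtG G x.first = true
  | 0, ⟨_, _⟩, ⟨rfl, hx⟩ => hx
  | _ + 1, _, ⟨x, hx, _, _, hl, rfl⟩ => (GStr.first_fuse hl).symm ▸ hX x hx

theorem inAtG_last_of_mem_gsG : ∀ {e : KExp T A} {x : GStr T A},
    x ∈ gsG G e → inAtG G x.last = true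
  | .act _, _, ⟨_, _, _, hβ, _, rfl⟩ => hβ
  | .test _, _, hx => hx.2.1
  | .plus _ _, _, .inl hx => inAtG_last_of_mem_gsG hx
  | .plus _ _, _, .inr hx => inAtG_last_of_mem_gsG hx
  | .cat _ _, _, ⟨_, _, _, hy, _, rfl⟩ => (inAtG_last_of_mem_gsG hy :)
  | .star _, _, hx =>
    let ⟨_, hn⟩ := Set.mem_iUnion.mp hx
    inAtG_last_of_mem_fpowG hn

theorem inAtG_first_of_mem_gsG : ∀ {e : KExp T A} {x : GStr T A},
    x ∈ gsG G e → inAtG G x.first = true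
  | .act _, _, ⟨_, _, hα, _, _, rfl⟩ => hα
  | .test _, ⟨_, _⟩, ⟨rfl, hx, _⟩ => hx
  | .plus _ _, _, .inl hx => inAtG_first_of_mem_gsG hx
  | .plus _ _, _, .inr hx => inAtG_first_of_mem_gsG hx
  | .cat _ _, _, ⟨_, hx, _, _, hl, rfl⟩ => (GStr.first_fuse hl).symm ▸ inAtG_first_of_mem_gsG hx
  | .star _, _, hx =>
    let ⟨_, hn⟩ := Set.mem_iUnion.mp hx
    inAtG_first_of_mem_fpowG (fun _ => inAtG_first_of_mem_gsG) hn

theorem nil_mem_gsG_iff {α : Atom T} (hα : inAtG G α = true) (e : KExp T A) :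
    (⟨[], α⟩ : GStr T A) ∈ gsG G e ↔ Eps α e = true := by
  induction e with
  | act p => simp [gsG, Eps]
  | test b => simp [gsG, Eps, hα]
  | plus e₁ e₂ ih₁ ih₂ => simp only [gsG, Eps, Set.mem_union, ih₁, ih₂, Bool.or_eq_true]
  | cat e₁ e₂ ih₁ ih₂ => simp only [gsG, Eps, nil_mem_fprod, ih₁, ih₂, Bool.and_eq_true]
  | star e => exact iff_of_true (Set.mem_iUnion.mpr ⟨0, rfl, hα⟩) rfl

theorem gsG_test_zero : gsG G (.test .zero : KExp T A) = ∅ := by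
  ext z
  simp [gsG, BExp.eval]

theorem gsG_test_one : gsG G (.test .one : KExp T A) = atomsG G := by
  ext z
  simp [gsG, atomsG, BExp.eval]

theorem gsSetG_empty : gsSetG G (∅ : Set (KExp T A)) = ∅ := by
  simp [gsSetG]

theorem gsSetG_singleton (e : KExp T A) : gsSetG G {e} = gsG G e := by
  simp [gsSetG]

theorem gsSetG_union (E₁ E₂ : Set (KExp T A)) :
    gsSetG G (E₁ ∪ E₂) = gsSetG G E₁ ∪ gsSetG G E₂ :=
  Set.biUnion_union E₁ E₂ _

theorem gsSetG_cat_right (E : Set (KExp T A)) (f : KExp T A) :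
    gsSetG G {x | ∃ e ∈ E, x = .cat e f} = fprod (gsSetG G E) (gsG G f) := by
  ext z
  simp only [gsSetG, Set.mem_iUnion]
  constructor
  · rintro ⟨_, ⟨e, he, rfl⟩, x, hx, y, hy, hl, rfl⟩
    exact ⟨x, Set.mem_biUnion he hx, y, hy, hl, rfl⟩
  · rintro ⟨x, hx, y, hy, hl, rfl⟩
    obtain ⟨e, he, hx⟩ := Set.mem_iUnion₂.mp hx
    exact ⟨_, ⟨e, he, rfl⟩, x, hx, y, hy, hl, rfl⟩

theorem gsSetG_prodSet (E : Set (KExp T A)) (e : KExp T A) :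
    gsSetG G (prodSet E e) = fprod (gsSetG G E) (gsG G e) := by
  unfold prodSet
  split
  · rw [gsSetG_empty, gsG_test_zero, fprod_empty]
  · rw [gsG_test_one, fprod_atomsG]
    intro x hx
    obtain ⟨e, -, hx⟩ := Set.mem_iUnion₂.mp hx
    exact inAtG_last_of_mem_gsG hx
  · exact gsSetG_cat_right E e

theorem gderiv_gsG_test (α : Atom T) (p : A) (b : BExp T) :
    gderiv α p (gsG G (.test b)) = ∅ :=
  Set.eq_empty_of_forall_notMem fun _ hz => List.cons_ne_nil _ _ hz.1

theorem gderiv_gsG_act_of_ne (α : Atom T) {p q : A} (h : p ≠ q) :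
    gderiv α p (gsG G (.act q)) = ∅ :=
  Set.eq_empty_of_forall_notMem fun _ ⟨_, _, _, _, _, hz⟩ => by
    simp only [GStr.mk.injEq, List.cons.injEq, Prod.mk.injEq] at hz
    exact h hz.1.1.2

end Semantics

theorem BExp.eval_foldr_and (β : Atom T) (l : List (BExp T)) :
    (l.foldr BExp.and BExp.one).eval β = true ↔ ∀ b ∈ l, b.eval β = true := by
  induction l with
  | nil => simp [BExp.eval]
  | cons b l ih => simp [BExp.eval, ih]

section Derivatives

variable [DecidableEq A] {G : Gamma T A} {α : Atom T}

theorem eval_gammaProd (p : A) (β : Atom T) :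
    (gammaProd G α p).eval β = true ↔
      ∀ x ∈ G.eqns, x.2.1 = p → x.1.eval α = true → x.2.2.eval β = true := by
  simp only [gammaProd, BExp.eval_foldr_and, List.forall_mem_map, List.mem_filter,
    Bool.and_eq_true, decide_eq_true_eq, and_imp]

theorem gderiv_gsG_act (hα : inAtG G α = true) (p : A) :
    gderiv α p (gsG G (.act p)) = gsG G (.test (gammaProd G α p)) := by
  ext ⟨zs, zl⟩
  simp [gsG, mem_gderiv, eval_gammaProd, hα, and_comm, and_left_comm]

theorem gderiv_gsG_eq_gsSetG_pdGaux (hα : inAtG G α = true) (p : A) (e : KExp T A) :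
    gderiv α p (gsG G e) = gsSetG G (pdGaux G α p e) := by
  induction e with
  | act q =>
    by_cases hq : p = q
    · subst hq
      rw [gderiv_gsG_act hα, pdGaux, if_pos rfl, gsSetG_singleton]
    · rw [gderiv_gsG_act_of_ne α hq, pdGaux, if_neg hq, gsSetG_empty]
  | test b => rw [gderiv_gsG_test, pdGaux, gsSetG_empty]
  | plus e₁ e₂ ih₁ ih₂ =>
    rw [pdGaux, gsSetG_union, ← ih₁, ← ih₂]
    rfl
  | cat e₁ e₂ ih₁ ih₂ =>
    rw [gsG, gderiv_fprod, pdGaux, gsSetG_union, gsSetG_prodSet, ← ih₁]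
    simp only [nil_mem_gsG_iff hα]
    split_ifs with h
    · simp [h, ih₂]
    · simp [h, gsSetG_empty]
  | star e ih =>
    rw [pdGaux, gsSetG_prodSet, ← ih]
    exact gderiv_fstarG G α p (gsG G e)

end Derivatives

end KAT

open KAT in
/-- `D_{αp}(GS^Γ(e)) = GS^Γ(Δ^Γ_{αp}(e))`. -/
theorem gderiv_gsG_eq_gsSetG_pdG {T A : Type} [DecidableEq A]
    (G : Gamma T A) (e : KExp T A) (α : Atom T) (p : A) :
    gderiv α p (gsG G e) = gsSetG G (pdG G α p e) := by
  unfold pdG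
  split_ifs with hα
  · exact gderiv_gsG_eq_gsSetG_pdGaux hα p e
  · rw [gsSetG_empty, Set.eq_empty_iff_forall_notMem]
    exact fun _ hz => hα (inAtG_first_of_mem_gsG hz)
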